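/- arXiv:1408.0469 — 5 statements merged into one kernel-verified Lean document; each statement's English description precedes it below -/
import Mathlib

section
/- Let n_T ≥ 2 be an integer, φ > 0 and δ ∈ (0,1) real numbers. Let X and Y be independent real random variables with X ~ Gamma(1,1) (i.e. exponential with rate 1) and Y ~ Gamma(n_T − 1, 1). Define γ := φ(X + (1−δ)Y)/(φδY + 1). Then for every x ≥ 1/δ − 1, P(γ ≥ x) = δ^{−(n_T−1)} e^{−x/φ} / (1 + x)^{n_T − 1}. -/
/-!
Since `Y ≥ 0`, the event `γ ≥ x` is the event `X ≥ a Y + b` with `a = x δ - (1 - δ)` and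
`b = x / φ`, and `x ≥ 1/δ - 1` is exactly `a ≥ 0`. Conditioning on `Y`, the exponential tail of `X`
turns the probability into `e^{-b} E[e^{-a Y}]`, and the Laplace transform of `Gamma(n_T - 1, 1)`
at `a` is `(1 + a)^{-(n_T - 1)}`, where `1 + a = δ (1 + x)`.
-/

open MeasureTheory ProbabilityTheory Real Set

lemma gammaMeasure_one_Ici {r c : ℝ} (hr : 0 < r) (hc : 0 ≤ c) :
    gammaMeasure 1 r (Ici c) = ENNReal.ofReal (exp (-(r * c))) := by
  have hpdf : ∀ y ∈ Ioi c, gammaPDF 1 r y = ENNReal.ofReal (r * exp (-r * y)) := fun y hy ↦ by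
    rw [gammaPDF_of_nonneg (hc.trans hy.le)]
    norm_num [Real.Gamma_one]
  have hint : IntegrableOn (fun y ↦ r * exp (-r * y)) (Ioi c) :=
    (exp_neg_integrableOn_Ioi c hr).const_mul r
  rw [gammaMeasure, withDensity_apply _ measurableSet_Ici, ← restrict_Ioi_eq_restrict_Ici,
    setLIntegral_congr_fun measurableSet_Ioi hpdf,
    ← ofReal_integral_eq_lintegral_ofReal hint (ae_of_all _ fun y ↦ by positivity),
    integral_const_mul, integral_exp_mul_Ioi (neg_lt_zero.mpr hr)]
  congr 1
  field_simp

lemma ae_nonneg_gammaMeasure (a r : ℝ) : ∀ᵐ y ∂gammaMeasure a r, 0 ≤ y := by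
  simp only [ae_iff, not_le]
  exact (withDensity_apply _ measurableSet_Iio).trans (lintegral_gammaPDF_of_nonpos le_rfl)

lemma measurable_gammaPDF (a r : ℝ) : Measurable (gammaPDF a r) :=
  (measurable_gammaPDFReal a r).ennreal_ofReal

lemma lintegral_exp_neg_mul_gammaMeasure {k r a : ℝ} (hk : 0 < k) (hr : 0 < r) (hra : 0 < r + a) :
    ∫⁻ y, ENNReal.ofReal (exp (-(a * y))) ∂gammaMeasure k r
      = ENNReal.ofReal ((r / (r + a)) ^ k) := by
  have hdens : ∀ y, gammaPDF k r y * ENNReal.ofReal (exp (-(a * y)))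
      = ENNReal.ofReal ((r / (r + a)) ^ k) * gammaPDF k (r + a) y := by
    intro y
    rcases lt_or_ge y 0 with hy | hy
    · simp only [gammaPDF_of_neg hy, zero_mul, mul_zero]
    · rw [gammaPDF_of_nonneg hy, gammaPDF_of_nonneg hy,
        ← ENNReal.ofReal_mul (by positivity), ← ENNReal.ofReal_mul (by positivity)]
      congr 1
      have hexp : exp (-(r * y)) * exp (-(a * y)) = exp (-((r + a) * y)) := by
        rw [← exp_add]; ring_nf
      rw [div_rpow hr.le hra.le, mul_assoc _ (exp _), hexp]
      field_simp
  rw [gammaMeasure, lintegral_withDensity_eq_lintegral_mul _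
    (measurable_gammaPDF k r) (by fun_prop)]
  simp only [Pi.mul_apply, hdens]
  rw [lintegral_const_mul _ (measurable_gammaPDF k (r + a)),
    lintegral_gammaPDF_eq_one hk hra, mul_one]

lemma measure_le_of_indepFun {Ω β : Type*} [MeasurableSpace Ω] [MeasurableSpace β]
    {μ : Measure Ω} [IsFiniteMeasure μ] {X : Ω → ℝ} {Y : Ω → β} (hX : Measurable X)
    (hY : Measurable Y) (hXY : IndepFun X Y μ) {g : β → ℝ} (hg : Measurable g) :
    μ {ω | g (Y ω) ≤ X ω} = ∫⁻ y, μ.map X (Ici (g y)) ∂μ.map Y := by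
  have hs : MeasurableSet {p : β × ℝ | g p.1 ≤ p.2} :=
    measurableSet_le (hg.comp measurable_fst) measurable_snd
  have hmap : μ.map (fun ω ↦ (Y ω, X ω)) = (μ.map Y).prod (μ.map X) :=
    (indepFun_iff_map_prod_eq_prod_map_map hY.aemeasurable hX.aemeasurable).mp hXY.symm
  change μ ((fun ω ↦ (Y ω, X ω)) ⁻¹' {p : β × ℝ | g p.1 ≤ p.2}) = _
  rw [← Measure.map_apply (hY.prodMk hX) hs, hmap, Measure.prod_apply hs]
  rfl

lemma measure_mul_add_le_of_indepFun {Ω : Type*} [MeasurableSpace Ω] {μ : Measure Ω}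
    [IsFiniteMeasure μ] {X Y : Ω → ℝ} (hX : Measurable X) (hY : Measurable Y)
    (hXY : IndepFun X Y μ) {k r s a b : ℝ} (hXlaw : μ.map X = gammaMeasure 1 r)
    (hYlaw : μ.map Y = gammaMeasure k s) (hk : 0 < k) (hr : 0 < r) (hs : 0 < s)
    (ha : 0 ≤ a) (hb : 0 ≤ b) :
    μ {ω | a * Y ω + b ≤ X ω} = ENNReal.ofReal (exp (-(r * b)) * (s / (s + r * a)) ^ k) := by
  rw [measure_le_of_indepFun hX hY hXY (by fun_prop : Measurable fun y ↦ a * y + b), hXlaw, hYlaw]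
  calc ∫⁻ y, gammaMeasure 1 r (Ici (a * y + b)) ∂gammaMeasure k s
      = ∫⁻ y, ENNReal.ofReal (exp (-(r * b))) * ENNReal.ofReal (exp (-(r * a * y)))
          ∂gammaMeasure k s := by
        refine lintegral_congr_ae ?_
        filter_upwards [ae_nonneg_gammaMeasure k s] with y hy
        rw [gammaMeasure_one_Ici hr (by positivity), ← ENNReal.ofReal_mul (exp_pos _).le,
          ← exp_add]
        ring_nf
    _ = ENNReal.ofReal (exp (-(r * b)) * (s / (s + r * a)) ^ k) := by
        rw [lintegral_const_mul _ (by fun_prop),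
          lintegral_exp_neg_mul_gammaMeasure hk hs (by positivity),
          ← ENNReal.ofReal_mul (exp_pos _).le]

lemma le_sinr_iff {φ δ t u v : ℝ} (hφ : 0 < φ) (hδ : 0 ≤ δ) (hv : 0 ≤ v) :
    t ≤ φ * (u + (1 - δ) * v) / (φ * δ * v + 1) ↔ (t * δ - (1 - δ)) * v + t / φ ≤ u := by
  have hsplit : t * (φ * δ * v + 1) = φ * ((t * δ - (1 - δ)) * v + t / φ) + φ * ((1 - δ) * v) := by
    field_simp
    ring
  rw [le_div_iff₀ (by positivity), hsplit, mul_add φ u, add_le_add_iff_right,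
    mul_le_mul_iff_right₀ hφ]

/-- Equation (20): closed-form tail of the first selected user's SINR. If
`X ~ Gamma(1,1)` and `Y ~ Gamma(nT-1,1)` are independent and
`γ = φ(X + (1-δ)Y)/(φδY + 1)`, then for `x ≥ 1/δ - 1`,
`P(γ ≥ x) = δ^{-(nT-1)} e^{-x/φ}/(1+x)^{nT-1}`. -/
theorem stmt_1 {Ω : Type*} [MeasurableSpace Ω] (μ : Measure Ω) [IsProbabilityMeasure μ]
    (nT : ℕ) (hnT : 2 ≤ nT) (φ δ : ℝ) (hφ : 0 < φ) (hδ : δ ∈ Set.Ioo (0:ℝ) 1)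
    (X Y : Ω → ℝ) (hX : Measurable X) (hY : Measurable Y)
    (hXlaw : μ.map X = gammaMeasure 1 1)
    (hYlaw : μ.map Y = gammaMeasure ((nT : ℝ) - 1) 1)
    (hindep : IndepFun X Y μ) :
    ∀ x : ℝ, 1 / δ - 1 ≤ x →
      μ {ω | x ≤ φ * (X ω + (1 - δ) * Y ω) / (φ * δ * Y ω + 1)}
        = ENNReal.ofReal ((δ ^ (nT - 1))⁻¹ * Real.exp (-x / φ) / (1 + x) ^ (nT - 1)) := by
  intro x hx
  obtain ⟨hδ0, hδ1⟩ := hδ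
  have hx0 : 0 ≤ x := by linarith [one_lt_one_div hδ0 hδ1]
  have ha : 0 ≤ x * δ - (1 - δ) := by
    rw [div_sub_one hδ0.ne', div_le_iff₀ hδ0] at hx
    linarith
  have hk : ((nT - 1 : ℕ) : ℝ) = (nT : ℝ) - 1 := by
    rw [Nat.cast_sub (by omega), Nat.cast_one]
  have hk_pos : (0 : ℝ) < nT - 1 := by
    rw [← hk]
    exact_mod_cast (by omega : 0 < nT - 1)
  have hY0 : ∀ᵐ ω ∂μ, 0 ≤ Y ω :=
    ae_of_ae_map hY.aemeasurable (hYlaw ▸ ae_nonneg_gammaMeasure _ _)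
  have hevent : {ω | x ≤ φ * (X ω + (1 - δ) * Y ω) / (φ * δ * Y ω + 1)}
      =ᵐ[μ] {ω | (x * δ - (1 - δ)) * Y ω + x / φ ≤ X ω} := by
    filter_upwards [hY0] with ω hω using propext (le_sinr_iff hφ hδ0.le hω)
  rw [measure_congr hevent, measure_mul_add_le_of_indepFun hX hY hindep hXlaw hYlaw
    hk_pos one_pos one_pos ha (by positivity),
    ← hk, rpow_natCast]
  congr 1
  have h1a : (1:ℝ) + 1 * (x * δ - (1 - δ)) = δ * (1 + x) := by ring
  rw [h1a, div_pow, mul_pow, neg_div, one_mul, one_pow]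
  field_simp
end

section
/- Let n_T and n be integers with 2 ≤ n ≤ n_T, let φ > 0 and x > 0 be real, and set a = (n_T − 1)/(2n_T − 1). Then ∫_x^∞ e^{−t/φ} (t − x)^{n−2} (t + a)^{−(2n_T−1)} dt < ∫_x^∞ e^{−t/φ} (t − x)^{n−2} (t + 1)^{−(n_T−1)} t^{−n_T} dt < ∫_x^∞ e^{−t/φ} (t − x)^{n−2} t^{−(2n_T−1)} dt. -/
/-!
On `(x, ∞)` all three integrands are the positive, integrable weight `e^{-t/φ} (t - x)^{n-2}`
times a kernel bounded by `x^{-(2 nT - 1)}`, so both inequalities reduce to pointwise strict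
inequalities between the kernels. The lower one is the strict weighted AM–GM inequality for
`t + 1` and `t` with weights `nT - 1` and `nT`, whose weighted mean is exactly `t + a`; the upper
one is `t^{nT-1} < (t + 1)^{nT-1}`.
-/

open MeasureTheory Set Filter Asymptotics Real

theorem pow_mul_pow_lt_weighted_mean_pow {p q : ℕ} (hp : p ≠ 0) (hq : q ≠ 0) {u v : ℝ}
    (hu : 0 ≤ u) (hv : 0 ≤ v) (huv : u ≠ v) :
    u ^ p * v ^ q < ((p * u + q * v) / (p + q)) ^ (p + q) := by
  have hpq : (0 : ℝ) < p + q := by positivity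
  have hmean := (Real.geom_mean_lt_arith_mean2_weighted_iff_of_pos (w₁ := p / (p + q))
    (w₂ := q / (p + q)) (by positivity) (by positivity) hu hv (by field_simp)).2 huv
  calc u ^ p * v ^ q = (u ^ (p / (p + q) : ℝ) * v ^ (q / (p + q) : ℝ)) ^ (p + q) := by
        rw [mul_pow, ← Real.rpow_mul_natCast hu, ← Real.rpow_mul_natCast hv, Nat.cast_add,
          div_mul_cancel₀ _ hpq.ne', div_mul_cancel₀ _ hpq.ne', Real.rpow_natCast,
          Real.rpow_natCast]
    _ < (p / (p + q) * u + q / (p + q) * v) ^ (p + q) :=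
        pow_lt_pow_left₀ hmean (by positivity) (by omega)
    _ = ((p * u + q * v) / (p + q)) ^ (p + q) := by
        field_simp

theorem add_one_pow_mul_pow_lt_add_pow {N : ℕ} (hN : 2 ≤ N) {t : ℝ} (ht : 0 ≤ t) :
    (t + 1) ^ (N - 1) * t ^ N < (t + ((N : ℝ) - 1) / (2 * N - 1)) ^ (2 * N - 1) := by
  have key := pow_mul_pow_lt_weighted_mean_pow (p := N - 1) (q := N) (by omega) (by omega)
    (by linarith : 0 ≤ t + 1) ht (by linarith)
  have hN' : (2 : ℝ) ≤ N := by exact_mod_cast hN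
  rwa [show N - 1 + N = 2 * N - 1 by omega, Nat.cast_sub (by omega : 1 ≤ N), Nat.cast_one,
    show ((N : ℝ) - 1) * (t + 1) + N * t = (2 * N - 1) * t + (N - 1) by ring,
    show (N : ℝ) - 1 + N = 2 * N - 1 by ring, add_div, mul_div_cancel_left₀ _ (by linarith)]
    at key

theorem pow_add_lt_add_one_pow_mul_pow {m k : ℕ} (hm : m ≠ 0) {t : ℝ} (ht : 0 < t) :
    t ^ (m + k) < (t + 1) ^ m * t ^ k := by
  rw [pow_add]
  gcongr
  linarith

theorem integrableOn_Ioi_exp_neg_div_mul_sub_pow (k : ℕ) {φ : ℝ} (hφ : 0 < φ) (x : ℝ) :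
    IntegrableOn (fun t => exp (-t / φ) * (t - x) ^ k) (Ioi x) := by
  set b := 1 / (2 * φ) with hb_def
  have hb : 0 < b := by positivity
  have hshift : (fun t => exp (b * (t - x))) =O[atTop] fun t => exp (b * t) :=
    ((isBigO_refl _ _).const_mul_left (exp (-(b * x)))).congr_left fun t => by
      rw [← exp_add]; ring_nf
  have hpow : (fun t => (t - x) ^ k) =o[atTop] fun t => exp (b * t) :=
    ((isLittleO_pow_exp_pos_mul_atTop k hb).comp_tendsto
      (tendsto_atTop_add_const_right _ (-x) tendsto_id)).trans_isBigO hshift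
  refine integrable_of_isBigO_exp_neg hb (by fun_prop)
    (((isBigO_refl (fun t => exp (-t / φ)) atTop).mul hpow.isBigO).congr_right fun t => ?_)
  rw [← exp_add, hb_def]
  congr 1
  field_simp
  ring

theorem setIntegral_lt_setIntegral_of_forall_lt {α : Type*} [MeasurableSpace α] {μ : Measure α}
    {s : Set α} {f g : α → ℝ} (hs : MeasurableSet s) (hμs : μ s ≠ 0)
    (hf : IntegrableOn f s μ) (hg : IntegrableOn g s μ) (h : ∀ x ∈ s, f x < g x) :
    ∫ x in s, f x ∂μ < ∫ x in s, g x ∂μ := by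
  rw [← sub_pos, ← integral_sub hg hf,
    setIntegral_pos_iff_support_of_nonneg_ae
      ((ae_restrict_iff' hs).2 (.of_forall fun x hx => (sub_pos.2 (h x hx)).le)) (hg.sub hf)]
  rwa [inter_eq_right.2 fun x hx => Function.mem_support.2 (sub_pos.2 (h x hx)).ne',
    pos_iff_ne_zero]

theorem setIntegral_mul_lt_setIntegral_mul {α : Type*} [MeasurableSpace α] {μ : Measure α}
    {s : Set α} {w K L : α → ℝ} {C : ℝ} (hs : MeasurableSet s) (hμs : μ s ≠ 0)
    (hw : IntegrableOn w s μ) (hw0 : ∀ x ∈ s, 0 < w x)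
    (hK : AEStronglyMeasurable K (μ.restrict s)) (hL : AEStronglyMeasurable L (μ.restrict s))
    (hK0 : ∀ x ∈ s, 0 ≤ K x) (hKL : ∀ x ∈ s, K x < L x) (hLC : ∀ x ∈ s, L x ≤ C) :
    ∫ x in s, w x * K x ∂μ < ∫ x in s, w x * L x ∂μ := by
  have hbdd {M : α → ℝ} (hM : AEStronglyMeasurable M (μ.restrict s))
      (hMC : ∀ x ∈ s, ‖M x‖ ≤ C) : IntegrableOn (fun x => w x * M x) s μ :=
    hw.mul_bdd hM ((ae_restrict_iff' hs).2 (.of_forall hMC))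
  refine setIntegral_lt_setIntegral_of_forall_lt hs hμs (hbdd hK fun x hx => ?_)
    (hbdd hL fun x hx => ?_) fun x hx => mul_lt_mul_of_pos_left (hKL x hx) (hw0 x hx)
  · rw [Real.norm_of_nonneg (hK0 x hx)]; exact (hKL x hx).le.trans (hLC x hx)
  · rw [Real.norm_of_nonneg ((hK0 x hx).trans (hKL x hx).le)]; exact hLC x hx

/-- Lemma 5 in integral form: two-sided bounds on
`V(n-1; -nT+2; -nT+1; 1/φ; x) = ∫_x^∞ e^{-t/φ}(t-x)^{n-2}(t+1)^{-(nT-1)} t^{-nT} dt`. -/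
theorem stmt_5 (nT n : ℕ) (h2 : 2 ≤ n) (hn : n ≤ nT) (φ x : ℝ) (hφ : 0 < φ) (hx : 0 < x)
    (a : ℝ) (ha : a = ((nT : ℝ) - 1) / (2 * (nT : ℝ) - 1)) :
    (∫ t in Ioi x, Real.exp (-t / φ) * (t - x) ^ (n - 2) * ((t + a) ^ (2 * nT - 1))⁻¹
      < ∫ t in Ioi x, Real.exp (-t / φ) * (t - x) ^ (n - 2) * ((t + 1) ^ (nT - 1))⁻¹ * (t ^ nT)⁻¹)
    ∧
    (∫ t in Ioi x, Real.exp (-t / φ) * (t - x) ^ (n - 2) * ((t + 1) ^ (nT - 1))⁻¹ * (t ^ nT)⁻¹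
      < ∫ t in Ioi x, Real.exp (-t / φ) * (t - x) ^ (n - 2) * (t ^ (2 * nT - 1))⁻¹) := by
  have hnT : 2 ≤ nT := h2.trans hn
  have ha0 : 0 ≤ a := by
    have : (2 : ℝ) ≤ nT := by exact_mod_cast hnT
    rw [ha]
    apply div_nonneg <;> linarith
  have hw0 (t : ℝ) (ht : t ∈ Ioi x) : 0 < exp (-t / φ) * (t - x) ^ (n - 2) := by
    have : 0 < t - x := sub_pos.2 ht
    positivity
  have hlower (t : ℝ) (ht : t ∈ Ioi x) :
      ((t + a) ^ (2 * nT - 1))⁻¹ < ((t + 1) ^ (nT - 1))⁻¹ * (t ^ nT)⁻¹ := by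
    have ht0 : 0 < t := hx.trans ht
    rw [← mul_inv, ha]
    exact inv_strictAnti₀ (by positivity) (add_one_pow_mul_pow_lt_add_pow hnT ht0.le)
  have hupper (t : ℝ) (ht : t ∈ Ioi x) :
      ((t + 1) ^ (nT - 1))⁻¹ * (t ^ nT)⁻¹ < (t ^ (2 * nT - 1))⁻¹ := by
    have ht0 : 0 < t := hx.trans ht
    rw [← mul_inv, show 2 * nT - 1 = nT - 1 + nT by omega]
    exact inv_strictAnti₀ (by positivity) (pow_add_lt_add_one_pow_mul_pow (by omega) ht0)
  have hbound (t : ℝ) (ht : t ∈ Ioi x) : (t ^ (2 * nT - 1))⁻¹ ≤ (x ^ (2 * nT - 1))⁻¹ :=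
    inv_anti₀ (by positivity) (pow_le_pow_left₀ hx.le (le_of_lt ht) _)
  have hw := integrableOn_Ioi_exp_neg_div_mul_sub_pow (n - 2) hφ x
  have hvol : volume (Ioi x) ≠ 0 := by simp
  simp only [mul_assoc _ (((_ : ℝ) + 1) ^ (nT - 1))⁻¹]
  constructor
  · refine setIntegral_mul_lt_setIntegral_mul measurableSet_Ioi hvol hw hw0 (by fun_prop)
      (by fun_prop) (fun t ht => ?_) hlower fun t ht => (hupper t ht).le.trans (hbound t ht)
    have := hx.trans ht
    positivity
  · refine setIntegral_mul_lt_setIntegral_mul measurableSet_Ioi hvol hw hw0 (by fun_prop)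
      (by fun_prop) (fun t ht => ?_) hupper hbound
    have := hx.trans ht
    positivity
end

section
/- Let n_T ≥ 2 and n ≥ 2 be integers, let φ > 0 and a > 0 be real. Then, as x → +∞, ∫_x^∞ e^{−t/φ} (t − x)^{n−2} [ t^{−(2n_T−1)} − (t + a)^{−(2n_T−1)} ] dt is asymptotically equivalent to (2n_T − 1) · a · Γ(n − 1) φ^{n−1} x^{−2n_T} e^{−x/φ}. -/
/-!
After the substitution `t = x + s` the integral becomes `e^{-x/φ} x^{-2nT}` times
`∫₀^∞ e^{-s/φ} s^{n-2} x^{m+1} ((x+s)^{-m} - (x+s+a)^{-m}) ds` with `m = 2nT - 1`.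
By the mean value theorem the scaled gap `x^{m+1} ((x+s)^{-m} - (x+s+a)^{-m})` lies between
`m a (x/(x+s+a))^{m+1}` and `m a`, so it tends to `m a` for every `s` and is dominated by `m a`.
Dominated convergence then gives the limit `m a ∫₀^∞ e^{-s/φ} s^{n-2} ds = m a Γ(n-1) φ^{n-1}`.
-/

open MeasureTheory Set Filter Topology

lemma exists_inv_pow_sub_inv_pow_eq (m : ℕ) {u v : ℝ} (hu : 0 < u) (huv : u < v) :
    ∃ c ∈ Ioo u v, (u ^ m)⁻¹ - (v ^ m)⁻¹ = m * (v - u) / c ^ (m + 1) := by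
  have hderiv : ∀ t ∈ Ioo u v, HasDerivAt (fun t : ℝ => t ^ (-(m : ℤ)))
      (-(m : ℤ) * t ^ (-(m : ℤ) - 1)) t := fun t ht =>
    by exact_mod_cast hasDerivAt_zpow (-(m : ℤ)) t (Or.inl (hu.trans ht.1).ne')
  have hcont : ContinuousOn (fun t : ℝ => t ^ (-(m : ℤ))) (Icc u v) :=
    fun t ht => (continuousAt_zpow₀ _ _ (Or.inl (hu.trans_le ht.1).ne')).continuousWithinAt
  obtain ⟨c, hc, hslope⟩ := exists_hasDerivAt_eq_slope _ _ huv hcont hderiv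
  refine ⟨c, hc, ?_⟩
  have hpow : c ^ (-(m : ℤ) - 1) = (c ^ (m + 1))⁻¹ := by
    rw [show -(m : ℤ) - 1 = -((m + 1 : ℕ) : ℤ) by push_cast; ring, zpow_neg, zpow_natCast]
  simp only [zpow_neg, zpow_natCast, hpow] at hslope
  rw [eq_div_iff (sub_ne_zero.2 huv.ne')] at hslope
  push_cast at hslope
  rw [div_eq_mul_inv]
  linear_combination hslope

lemma inv_pow_sub_inv_pow_add_bounds (m : ℕ) {u a : ℝ} (hu : 0 < u) (ha : 0 < a) :
    m * a / (u + a) ^ (m + 1) ≤ (u ^ m)⁻¹ - ((u + a) ^ m)⁻¹ ∧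
      (u ^ m)⁻¹ - ((u + a) ^ m)⁻¹ ≤ m * a / u ^ (m + 1) := by
  obtain ⟨c, ⟨huc, hcv⟩, heq⟩ := exists_inv_pow_sub_inv_pow_eq m hu (lt_add_of_pos_right u ha)
  rw [heq, add_sub_cancel_left]
  have hc : 0 < c := hu.trans huc
  exact ⟨by gcongr, by gcongr⟩

lemma tendsto_div_add_const_atTop {𝕜 : Type*} [Field 𝕜] [LinearOrder 𝕜] [IsStrictOrderedRing 𝕜]
    [TopologicalSpace 𝕜] [OrderTopology 𝕜] (c : 𝕜) :
    Tendsto (fun x : 𝕜 => x / (x + c)) atTop (𝓝 1) := by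
  have h : Tendsto (fun x : 𝕜 => 1 - c / (x + c)) atTop (𝓝 (1 - 0)) :=
    tendsto_const_nhds.sub <| tendsto_const_nhds.div_atTop <|
      tendsto_atTop_add_const_right _ _ tendsto_id
  rw [sub_zero] at h
  refine h.congr' ?_
  filter_upwards [eventually_gt_atTop (-c)] with x hx
  have : x + c ≠ 0 := by linarith
  field_simp
  ring

noncomputable def scaledGap (m : ℕ) (a x s : ℝ) : ℝ :=
  x ^ (m + 1) * (((x + s) ^ m)⁻¹ - ((x + s + a) ^ m)⁻¹)

section ScaledGap

variable (m : ℕ) {a x s : ℝ}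

lemma scaledGap_bounds (hx : 0 < x) (hs : 0 ≤ s) (ha : 0 < a) :
    m * a * (x / (x + s + a)) ^ (m + 1) ≤ scaledGap m a x s ∧ scaledGap m a x s ≤ m * a := by
  have hxs : 0 < x + s := by linarith
  obtain ⟨hlower, hupper⟩ := inv_pow_sub_inv_pow_add_bounds m hxs ha
  have hgap : 0 ≤ ((x + s) ^ m)⁻¹ - ((x + s + a) ^ m)⁻¹ := le_trans (by positivity) hlower
  constructor
  · calc m * a * (x / (x + s + a)) ^ (m + 1)
        = x ^ (m + 1) * (m * a / (x + s + a) ^ (m + 1)) := by rw [div_pow]; ring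
      _ ≤ scaledGap m a x s := by unfold scaledGap; gcongr
  · calc scaledGap m a x s ≤ (x + s) ^ (m + 1) * (m * a / (x + s) ^ (m + 1)) :=
          mul_le_mul (by gcongr; linarith) hupper hgap (by positivity)
      _ = m * a := by field_simp

lemma tendsto_scaledGap (hs : 0 ≤ s) (ha : 0 < a) :
    Tendsto (fun x => scaledGap m a x s) atTop (𝓝 (m * a)) := by
  have hlower : Tendsto (fun x : ℝ => m * a * (x / (x + s + a)) ^ (m + 1)) atTop (𝓝 (m * a)) := by
    simpa [add_assoc] using ((tendsto_div_add_const_atTop (s + a)).pow (m + 1)).const_mul (m * a)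
  refine tendsto_of_tendsto_of_tendsto_of_le_of_le' hlower tendsto_const_nhds ?_ ?_ <;>
    filter_upwards [eventually_gt_atTop 0] with x hx
  exacts [(scaledGap_bounds m hx hs ha).1, (scaledGap_bounds m hx hs ha).2]

end ScaledGap

lemma setIntegral_Ioi_eq_setIntegral_Ioi_zero_comp_add {E : Type*} [NormedAddCommGroup E]
    [NormedSpace ℝ E] (x : ℝ) (f : ℝ → E) :
    ∫ t in Ioi x, f t = ∫ s in Ioi 0, f (s + x) := by
  have h := (measurePreserving_add_right volume x).setIntegral_preimage_emb
      (measurableEmbedding_addRight x) f (Ioi x)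
  rwa [show (· + x) ⁻¹' Ioi x = Ioi 0 by ext; simp, eq_comm] at h

lemma integral_exp_neg_div_mul_pow_Ioi (k : ℕ) {φ : ℝ} (hφ : 0 < φ) :
    ∫ s in Ioi (0 : ℝ), Real.exp (-s / φ) * s ^ k = Real.Gamma (k + 1) * φ ^ (k + 1) := by
  have h := Real.integral_rpow_mul_exp_neg_mul_Ioi (a := k + 1) (by positivity) (inv_pos.2 hφ)
  simp only [add_sub_cancel_right, Real.rpow_natCast, one_div, inv_inv] at h
  rw [mul_comm, ← Real.rpow_natCast φ, Nat.cast_add_one, ← h]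
  refine setIntegral_congr_fun measurableSet_Ioi fun s _ => ?_
  rw [mul_comm, neg_div, div_eq_inv_mul]

lemma integrableOn_exp_neg_div_mul_pow_Ioi (k : ℕ) {φ : ℝ} (hφ : 0 < φ) :
    IntegrableOn (fun s : ℝ => Real.exp (-s / φ) * s ^ k) (Ioi 0) :=
  .of_integral_ne_zero <| by rw [integral_exp_neg_div_mul_pow_Ioi k hφ]; positivity

lemma setIntegral_Ioi_exp_mul_pow_mul_inv_pow_sub_inv_pow (k m : ℕ) (φ a : ℝ) {x : ℝ}
    (hx : 0 < x) :
    ∫ t in Ioi x, Real.exp (-t / φ) * (t - x) ^ k * ((t ^ m)⁻¹ - ((t + a) ^ m)⁻¹) =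
      Real.exp (-x / φ) * (x ^ (m + 1))⁻¹ *
        ∫ s in Ioi 0, Real.exp (-s / φ) * s ^ k * scaledGap m a x s := by
  rw [setIntegral_Ioi_eq_setIntegral_Ioi_zero_comp_add, ← integral_const_mul]
  refine setIntegral_congr_fun measurableSet_Ioi fun s _ => ?_
  have : x ^ (m + 1) ≠ 0 := by positivity
  rw [scaledGap, add_sub_cancel_right, add_comm s x, neg_add, add_div, Real.exp_add]
  field_simp

lemma tendsto_setIntegral_exp_mul_pow_mul_scaledGap (k m : ℕ) {φ a : ℝ} (hφ : 0 < φ)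
    (ha : 0 < a) :
    Tendsto (fun x => ∫ s in Ioi 0, Real.exp (-s / φ) * s ^ k * scaledGap m a x s)
      atTop (𝓝 (Real.Gamma (k + 1) * φ ^ (k + 1) * (m * a))) := by
  rw [← integral_exp_neg_div_mul_pow_Ioi k hφ, ← integral_mul_const]
  refine tendsto_integral_filter_of_dominated_convergence
    (fun s => Real.exp (-s / φ) * s ^ k * (m * a)) (.of_forall fun x => by unfold scaledGap; fun_prop)
    ?_ ((integrableOn_exp_neg_div_mul_pow_Ioi k hφ).mul_const _) ?_
  · filter_upwards [eventually_gt_atTop 0] with x hx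
    filter_upwards [ae_restrict_mem measurableSet_Ioi] with s (hs : 0 < s)
    obtain ⟨hlower, hupper⟩ := scaledGap_bounds m hx hs.le ha
    have hweight : 0 ≤ Real.exp (-s / φ) * s ^ k := by positivity
    rw [Real.norm_eq_abs, abs_of_nonneg (mul_nonneg hweight (le_trans (by positivity) hlower))]
    gcongr
  · filter_upwards [ae_restrict_mem measurableSet_Ioi] with s (hs : 0 < s)
    exact (tendsto_scaledGap m hs.le ha).const_mul _

/-- Tightness of the Lemma 5 bounds: as `x → ∞`,
`∫_x^∞ e^{-t/φ}(t-x)^{n-2}[t^{-(2nT-1)} - (t+a)^{-(2nT-1)}] dt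
  ~ (2nT-1)·a·Γ(n-1) φ^{n-1} x^{-2nT} e^{-x/φ}`. -/
theorem stmt_7 (nT n : ℕ) (hnT : 2 ≤ nT) (hn : 2 ≤ n) (φ a : ℝ) (hφ : 0 < φ) (ha : 0 < a) :
    Tendsto (fun x : ℝ =>
        (∫ t in Ioi x, Real.exp (-t / φ) * (t - x) ^ (n - 2) *
            ((t ^ (2 * nT - 1))⁻¹ - ((t + a) ^ (2 * nT - 1))⁻¹))
          / ((2 * (nT : ℝ) - 1) * a * Real.Gamma ((n : ℝ) - 1) * φ ^ (n - 1) *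
              (x ^ (2 * nT))⁻¹ * Real.exp (-x / φ)))
      atTop (nhds 1) := by
  obtain ⟨k, rfl⟩ : ∃ k, n = k + 2 := ⟨n - 2, by omega⟩
  obtain ⟨m, hm⟩ : ∃ m, 2 * nT = m + 1 := ⟨2 * nT - 1, by omega⟩
  have hmℝ : 2 * (nT : ℝ) - 1 = m := by
    have := congrArg (Nat.cast : ℕ → ℝ) hm; push_cast at this; linarith
  have hk : ((k + 2 : ℕ) : ℝ) - 1 = k + 1 := by push_cast; ring
  simp only [hm, hmℝ, hk, Nat.add_sub_cancel, show k + 2 - 1 = k + 1 from rfl]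
  have hm0 : 0 < m := by omega
  have hC : 0 < Real.Gamma (k + 1) * φ ^ (k + 1) * (m * a) := by positivity
  have hlim := (tendsto_setIntegral_exp_mul_pow_mul_scaledGap k m hφ ha).div_const
    (Real.Gamma (k + 1) * φ ^ (k + 1) * (m * a))
  rw [div_self hC.ne'] at hlim
  refine hlim.congr' ?_
  filter_upwards [eventually_gt_atTop 0] with x hx
  rw [setIntegral_Ioi_exp_mul_pow_mul_inv_pow_sub_inv_pow k m φ a hx]
  generalize (∫ s in Ioi (0 : ℝ), _ : ℝ) = I
  have : x ^ (m + 1) ≠ 0 := by positivity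
  field_simp
end

section
/- Let n_T ≥ 2 and n ≥ 1 be integers and let c > 0, φ > 0, x ∈ ℝ. For K large enough that log(cK/φ^{n_T−1}) > 1, define b_K = φ log(cK/φ^{n_T−1}) − φ(n_T + n − 2) log log(cK/φ^{n_T−1}). Then lim_{K→∞} c φ^{n−1} K · exp(−(φx + b_K)/φ) / (φx + b_K)^{n_T+n−2} = e^{−x}. -/
/-!
Put `t = cK/φ^{nT-1}`, `L = log t` and `m = nT + n - 2`, so that `φx + b_K = φ D` with
`D = x + L - m log L`. Then `exp (-D) = e^{-x} L^m / t`, and the quantity in question is exactly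
`t e^{-D} / D^m = e^{-x} (L / D)^m`, which tends to `e^{-x}` because `log L = o(L)` forces `D / L → 1`.
-/

open Filter Topology Real

theorem tendsto_add_sub_mul_log_div_self {α : Type*} {l : Filter α} {L : α → ℝ}
    (hL : Tendsto L l atTop) (x a : ℝ) :
    Tendsto (fun k => (x + L k - a * log (L k)) / L k) l (𝓝 1) := by
  have hx : Tendsto (fun k => x * (L k)⁻¹) l (𝓝 0) := by
    simpa using (tendsto_inv_atTop_zero.comp hL).const_mul x
  have hlog : Tendsto (fun k => log (L k) / L k) l (𝓝 0) :=
    isLittleO_log_id_atTop.tendsto_div_nhds_zero.comp hL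
  have hlim := (hx.add_const 1).sub (hlog.const_mul a)
  rw [zero_add, mul_zero, sub_zero] at hlim
  refine hlim.congr' ?_
  filter_upwards [hL.eventually_gt_atTop 0] with k hk
  field_simp

theorem mul_exp_neg_add_log_sub_mul_log_log {t : ℝ} (ht : 1 < t) (x : ℝ) (m : ℕ) :
    t * exp (-(x + log t - m * log (log t))) = exp (-x) * log t ^ m := by
  have hlog : 0 < log t := log_pos ht
  rw [show -(x + log t - m * log (log t)) = -x - log t + m * log (log t) by ring,
    exp_add, exp_sub, exp_nat_mul, exp_log hlog, exp_log (by linarith)]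
  field_simp

theorem tendsto_mul_exp_neg_div_pow {α : Type*} {l : Filter α} {t : α → ℝ}
    (ht : Tendsto t l atTop) (x : ℝ) (m : ℕ) :
    Tendsto (fun k => t k * exp (-(x + log (t k) - m * log (log (t k))))
      / (x + log (t k) - m * log (log (t k))) ^ m) l (𝓝 (exp (-x))) := by
  have hratio : Tendsto (fun k => log (t k) / (x + log (t k) - m * log (log (t k)))) l (𝓝 1) := by
    simpa using (tendsto_add_sub_mul_log_div_self (tendsto_log_atTop.comp ht) x m).inv₀ one_ne_zero
  have hlim := (hratio.pow m).const_mul (exp (-x))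
  rw [one_pow, mul_one] at hlim
  refine hlim.congr' ?_
  filter_upwards [ht.eventually_gt_atTop 1] with k hk
  rw [mul_exp_neg_add_log_sub_mul_log_log hk, div_pow, mul_div_assoc]

/-- Limit computation (equation (64), Appendix E): with
`b_K = φ log(cK/φ^{nT-1}) - φ(nT+n-2) log log(cK/φ^{nT-1})`,
`c φ^{n-1} K exp(-(φx+b_K)/φ)/(φx+b_K)^{nT+n-2} → e^{-x}` as `K → ∞`. -/
theorem stmt_8 (nT n : ℕ) (hnT : 2 ≤ nT) (hn : 1 ≤ n) (c φ : ℝ) (hc : 0 < c) (hφ : 0 < φ)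
    (x : ℝ) (b : ℕ → ℝ)
    (hb : ∀ K : ℕ, b K = φ * Real.log (c * K / φ ^ (nT - 1)) -
      φ * ((nT : ℝ) + (n : ℝ) - 2) * Real.log (Real.log (c * K / φ ^ (nT - 1)))) :
    Tendsto (fun K : ℕ =>
        c * φ ^ (n - 1) * (K : ℝ) * Real.exp (-(φ * x + b K) / φ)
          / (φ * x + b K) ^ (nT + n - 2))
      atTop (nhds (Real.exp (-x))) := by
  set t : ℕ → ℝ := fun K => c * K / φ ^ (nT - 1)
  have ht : Tendsto t atTop atTop :=
    (tendsto_natCast_atTop_atTop.const_mul_atTop hc).atTop_div_const (pow_pos hφ _)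
  have hm : ((nT : ℝ) + n - 2) = ((nT + n - 2 : ℕ) : ℝ) := by
    rw [Nat.cast_sub (by omega)]; push_cast; ring
  have hpow : φ ^ (n - 1) * φ ^ (nT - 1) = φ ^ (nT + n - 2) := by
    rw [← pow_add]; congr 1; omega
  refine (tendsto_mul_exp_neg_div_pow ht x (nT + n - 2)).congr fun K => ?_
  have hD : φ * x + b K
      = φ * (x + log (t K) - ((nT + n - 2 : ℕ) : ℝ) * log (log (t K))) := by
    rw [hb K, ← hm]; ring
  rw [hD, neg_div, mul_div_cancel_left₀ _ hφ.ne', mul_pow, ← hpow]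
  field_simp
  rw [show t K * φ ^ (nT - 1) = c * K from div_mul_cancel₀ _ (pow_ne_zero _ hφ.ne')]
end

section
/- Let m ≥ 1 be an integer and C > 0, φ > 0 real. Let F be the cumulative distribution function of a real random variable and suppose there exist constants C_0 > 0 and x_0 > 0 such that |1 − F(x) − C x^{−m} e^{−x/φ}| ≤ C_0 x^{−m−1} e^{−x/φ} for all x ≥ x_0. For each K ≥ 2 let X_1, …, X_K be i.i.d. with c.d.f. F and M_K = max_{1≤k≤K} X_k, and define χ_K = φ log(CK/φ^m) − φ m log log(CK/φ^m) (for K large enough that log(CK/φ^m) > 1). Then there exist constants C_1 > 0 and K_0 such that for all K ≥ K_0, P( χ_K − φ log log √K ≤ M_K ≤ χ_K + φ log log √K ) ≥ 1 − C_1 / log K. -/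
/-!
By independence, `P(M_K ≤ x) = F(x)^K`. Put `L = log (C K / φ^m)`, so that `χ_K = φ L - φ m log L`
and `C K e^{-χ_K/φ} = (φ L)^m`, and let `ℓ = log log √K`. At `a = χ_K - φ ℓ` and `b = χ_K + φ ℓ`
the tail asymptotics, together with `φ L / 2 ≤ χ_K ≤ φ L`, give `K (1 - F a) ≥ log K / 4` and
`K (1 - F b) ≤ (C + C₀) 2^(m+1) / (C log K)`. Hence `F(a)^K ≤ exp (-K (1 - F a)) ≤ 4 / log K` and,
by Bernoulli's inequality, `1 - F(b)^K ≤ K (1 - F b)`.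
-/

open MeasureTheory ProbabilityTheory
open Filter Real

theorem ProbabilityTheory.iIndepFun.measure_iSup_le {Ω ι : Type*} [MeasurableSpace Ω]
    {μ : Measure Ω} [Fintype ι] [Nonempty ι] {X : ι → Ω → ℝ} (hX : iIndepFun X μ) (x : ℝ) :
    μ {ω | ⨆ i, X i ω ≤ x} = ∏ i, μ {ω | X i ω ≤ x} := by
  have hset : {ω | ⨆ i, X i ω ≤ x} = ⋂ i ∈ Finset.univ, X i ⁻¹' Set.Iic x := by
    ext ω
    simpa using ciSup_le_iff (Set.finite_range (X · ω)).bddAbove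
  rw [hset, hX.measure_inter_preimage_eq_mul _ fun _ _ ↦ measurableSet_Iic]
  rfl

theorem MeasureTheory.measure_le_sub_measure_le_le {Ω : Type*} [MeasurableSpace Ω]
    (μ : Measure Ω) (M : Ω → ℝ) (a b : ℝ) :
    μ {ω | M ω ≤ b} - μ {ω | M ω ≤ a} ≤ μ {ω | a ≤ M ω ∧ M ω ≤ b} := by
  refine tsub_le_iff_right.mpr ((measure_mono fun ω hω ↦ ?_).trans (measure_union_le _ _))
  by_cases ha : M ω ≤ a
  · exact Or.inr ha
  · exact Or.inl ⟨(not_le.mp ha).le, hω⟩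

theorem ENNReal.one_sub_ofReal_le_ofReal_sub_ofReal {p q r : ℝ} (hq : 0 ≤ q) (hr : 0 ≤ r)
    (h : 1 - r ≤ p - q) :
    1 - ENNReal.ofReal r ≤ ENNReal.ofReal p - ENNReal.ofReal q := by
  rw [← ENNReal.ofReal_one, ← ENNReal.ofReal_sub _ hr, ← ENNReal.ofReal_sub _ hq]
  exact ENNReal.ofReal_le_ofReal h

theorem one_sub_pow_le_mul_one_sub {p : ℝ} (hp : 0 ≤ p) (n : ℕ) : 1 - p ^ n ≤ n * (1 - p) := by
  have := one_add_mul_le_pow (by linarith : (-2 : ℝ) ≤ p - 1) n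
  rw [add_sub_cancel] at this
  linarith

theorem pow_le_exp_neg_mul_one_sub {p : ℝ} (hp : 0 ≤ p) (n : ℕ) :
    p ^ n ≤ exp (-(n * (1 - p))) := by
  have hle : p ≤ exp (-(1 - p)) := by linarith [one_sub_le_exp_neg (1 - p)]
  calc p ^ n ≤ exp (-(1 - p)) ^ n := pow_le_pow_left₀ hp hle n
    _ = exp (-(n * (1 - p))) := by rw [← exp_nat_mul]; ring_nf

theorem Real.exp_neg_le_inv {t : ℝ} (ht : 0 < t) : exp (-t) ≤ t⁻¹ := by
  rw [exp_neg]
  exact inv_anti₀ ht (by linarith [add_one_le_exp t])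

theorem mul_exp_neg_div_eq {C φ K L χ : ℝ} {m : ℕ} (hφ : 0 < φ) (hCK : 0 < C * K / φ ^ m)
    (hL : L = log (C * K / φ ^ m)) (hL0 : 0 < L) (hχ : χ = φ * L - φ * m * log L) (t : ℝ) :
    C * K * exp (-t / φ) = (φ * L) ^ m * exp ((χ - t) / φ) := by
  have hsplit : -t / φ = -L + m * log L + (χ - t) / φ := by
    rw [hχ]; field_simp; ring
  obtain ⟨hC0, hK0⟩ := mul_ne_zero_iff.mp ((div_pos_iff_of_pos_right (by positivity)).mp hCK).ne'
  rw [hsplit, exp_add, exp_add, exp_neg, hL, exp_log hCK, ← hL, exp_nat_mul, exp_log hL0]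
  field_simp
  ring

section Tail

variable {C C₀ φ x₀ : ℝ} {m : ℕ} {F : ℝ → ℝ}
  (htail : ∀ x : ℝ, x₀ ≤ x →
    |1 - F x - C / x ^ m * exp (-x / φ)| ≤ C₀ / x ^ (m + 1) * exp (-x / φ))
include htail

theorem one_sub_le_of_tail (hC₀ : 0 ≤ C₀) {x : ℝ} (hx₀ : x₀ ≤ x) (hx : 1 ≤ x) :
    1 - F x ≤ (C + C₀) / x ^ m * exp (-x / φ) := by
  have hbound : C₀ / x ^ (m + 1) ≤ C₀ / x ^ m :=
    div_le_div_of_nonneg_left hC₀ (by positivity) (pow_le_pow_right₀ hx m.le_succ)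
  have := (abs_le.mp (htail x hx₀)).2
  rw [add_div, add_mul]
  nlinarith [exp_pos (-x / φ)]

theorem le_one_sub_of_tail {x : ℝ} (hx₀ : x₀ ≤ x) (hx : 0 < x) (hxC : 2 * C₀ ≤ C * x) :
    C / 2 / x ^ m * exp (-x / φ) ≤ 1 - F x := by
  have hbound : C₀ / x ^ (m + 1) ≤ C / 2 / x ^ m := by
    rw [pow_succ', ← div_div, div_le_div_iff_of_pos_right (by positivity), div_le_iff₀ hx]
    linarith
  have := (abs_le.mp (htail x hx₀)).1
  have hhalf : C / 2 / x ^ m = C / x ^ m - C / 2 / x ^ m := by ring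
  rw [hhalf, sub_mul]
  nlinarith [exp_pos (-x / φ)]

variable {K L χ : ℝ} (hK : 0 ≤ K)
  (hexp : ∀ t, C * K * exp (-t / φ) = (φ * L) ^ m * exp ((χ - t) / φ))
include hK hexp

theorem exp_div_two_le_mul_one_sub {a : ℝ} (ha₀ : x₀ ≤ a) (ha : 0 < a)
    (haC : 2 * C₀ ≤ C * a) (haL : a ≤ φ * L) :
    exp ((χ - a) / φ) / 2 ≤ K * (1 - F a) := by
  have hpow : a ^ m ≤ (φ * L) ^ m := pow_le_pow_left₀ ha.le haL m
  calc exp ((χ - a) / φ) / 2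
      ≤ (φ * L) ^ m / a ^ m * exp ((χ - a) / φ) / 2 := by
        gcongr
        exact le_mul_of_one_le_left (exp_pos _).le ((one_le_div (by positivity)).mpr hpow)
    _ = K * (C / 2 / a ^ m * exp (-a / φ)) := by
        rw [show K * (C / 2 / a ^ m * exp (-a / φ)) = C * K * exp (-a / φ) / (2 * a ^ m) by ring,
          hexp]
        ring
    _ ≤ K * (1 - F a) := mul_le_mul_of_nonneg_left (le_one_sub_of_tail htail ha₀ ha haC) hK

theorem mul_one_sub_le_exp (hC : 0 < C) (hC₀ : 0 ≤ C₀) (hL : 0 ≤ φ * L) {b : ℝ}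
    (hb₀ : x₀ ≤ b) (hb : 1 ≤ b) (hbL : φ * L ≤ 2 * b) :
    K * (1 - F b) ≤ (C + C₀) * 2 ^ m / C * exp ((χ - b) / φ) := by
  have hpow : (φ * L) ^ m ≤ 2 ^ m * b ^ m := by
    rw [← mul_pow]; exact pow_le_pow_left₀ hL hbL m
  calc K * (1 - F b) ≤ K * ((C + C₀) / b ^ m * exp (-b / φ)) :=
        mul_le_mul_of_nonneg_left (one_sub_le_of_tail htail hC₀ hb₀ hb) hK
    _ = (C + C₀) / C * ((φ * L) ^ m / b ^ m) * exp ((χ - b) / φ) := by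
        rw [show K * ((C + C₀) / b ^ m * exp (-b / φ))
            = (C + C₀) / C / b ^ m * (C * K * exp (-b / φ)) by field_simp, hexp]
        ring
    _ ≤ (C + C₀) / C * 2 ^ m * exp ((χ - b) / φ) := by
        gcongr
        exact (div_le_iff₀ (by positivity)).mpr hpow
    _ = (C + C₀) * 2 ^ m / C * exp ((χ - b) / φ) := by ring

end Tail

theorem pow_add_one_sub_pow_le {C C₀ φ x₀ : ℝ} {m : ℕ} {F : ℝ → ℝ}
    (htail : ∀ x : ℝ, x₀ ≤ x →
      |1 - F x - C / x ^ m * exp (-x / φ)| ≤ C₀ / x ^ (m + 1) * exp (-x / φ))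
    (hC : 0 < C) (hC₀ : 0 ≤ C₀) (hφ : 0 < φ) (hF : ∀ x, 0 ≤ F x) {K : ℕ} {L χ : ℝ}
    (hK : 2 ≤ log K) (hL : L = log (C * K / φ ^ m)) (hL1 : 1 ≤ L) (hmL : m * log L ≤ L / 2)
    (hχ : χ = φ * L - φ * m * log L)
    (ha : max (max x₀ 1) (2 * C₀ / C) ≤ χ - φ * log (log K / 2)) :
    F (χ - φ * log (log K / 2)) ^ K + (1 - F (χ + φ * log (log K / 2)) ^ K)
      ≤ (4 + (C + C₀) * 2 ^ (m + 1) / C) / log K := by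
  set ℓ := log (log K / 2)
  have hℓ : 0 ≤ ℓ := log_nonneg (by linarith)
  have hexpℓ : exp ℓ = log K / 2 := exp_log (by linarith)
  have hφℓ : 0 ≤ φ * ℓ := mul_nonneg hφ.le hℓ
  have hlogL : 0 ≤ φ * m * log L := by have := log_nonneg hL1; positivity
  have hχL : χ ≤ φ * L := by linarith
  have hLχ : φ * L ≤ 2 * χ := by nlinarith
  have hK0 : 0 < K := Nat.pos_of_ne_zero (by rintro rfl; norm_num at hK)
  have hCK : 0 < C * K / φ ^ m := by positivity
  have hexp := mul_exp_neg_div_eq hφ hCK hL (by linarith) hχ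
  obtain ⟨⟨ha₀, ha1⟩, haC⟩ := max_le_iff.mp ha |>.imp_left max_le_iff.mp
  have hlower : log K / 4 ≤ K * (1 - F (χ - φ * ℓ)) := by
    have := exp_div_two_le_mul_one_sub htail K.cast_nonneg hexp ha₀ (by linarith)
      ((div_le_iff₀' hC).mp haC) (by linarith)
    rw [sub_sub_cancel, mul_div_cancel_left₀ _ hφ.ne', hexpℓ] at this
    linarith
  have hupper : K * (1 - F (χ + φ * ℓ)) ≤ (C + C₀) * 2 ^ (m + 1) / C / log K := by
    have := mul_one_sub_le_exp htail K.cast_nonneg hexp hC hC₀ (by linarith) (b := χ + φ * ℓ)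
      (by linarith) (by linarith) (by linarith)
    rw [sub_add_cancel_left, neg_div, mul_div_cancel_left₀ _ hφ.ne', exp_neg, hexpℓ] at this
    convert this using 1
    field_simp
    ring
  calc F (χ - φ * ℓ) ^ K + (1 - F (χ + φ * ℓ) ^ K)
      ≤ exp (-(K * (1 - F (χ - φ * ℓ)))) + K * (1 - F (χ + φ * ℓ)) :=
        add_le_add (pow_le_exp_neg_mul_one_sub (hF _) K) (one_sub_pow_le_mul_one_sub (hF _) K)
    _ ≤ exp (-(log K / 4)) + (C + C₀) * 2 ^ (m + 1) / C / log K := by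
        gcongr
    _ ≤ (log K / 4)⁻¹ + (C + C₀) * 2 ^ (m + 1) / C / log K := by
        gcongr
        exact exp_neg_le_inv (by positivity)
    _ = (4 + (C + C₀) * 2 ^ (m + 1) / C) / log K := by ring

theorem Real.eventually_mul_log_le (c : ℝ) {ε : ℝ} (hε : 0 < ε) :
    ∀ᶠ y in atTop, c * log y ≤ ε * y := by
  filter_upwards [(isLittleO_log_id_atTop.const_mul_left c).bound hε,
    eventually_ge_atTop 0] with y hy hy0
  rw [norm_eq_abs, norm_eq_abs, id, abs_of_nonneg hy0] at hy
  exact (le_abs_self _).trans hy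

theorem eventually_threshold_bounds {C φ : ℝ} {m : ℕ} {χ : ℕ → ℝ} (hC : 0 < C) (hφ : 0 < φ)
    (hχ : ∀ K : ℕ, χ K = φ * log (C * K / φ ^ m) - φ * m * log (log (C * K / φ ^ m)))
    (T : ℝ) :
    ∀ᶠ K : ℕ in atTop, 2 ≤ log K ∧ 1 ≤ log (C * K / φ ^ m) ∧
      m * log (log (C * K / φ ^ m)) ≤ log (C * K / φ ^ m) / 2 ∧
      T ≤ χ K - φ * log (log K / 2) := by
  set c := log (C / φ ^ m)
  have hsplit : ∀ K : ℕ, 0 < K → log (C * K / φ ^ m) = c + log K := fun K hK ↦ by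
    rw [mul_div_right_comm, log_mul (by positivity) (by positivity)]
  have hlogK : Tendsto (fun K : ℕ ↦ log K) atTop atTop :=
    tendsto_log_atTop.comp tendsto_natCast_atTop_atTop
  have hL : Tendsto (fun K : ℕ ↦ log (C * K / φ ^ m)) atTop atTop :=
    (tendsto_atTop_add_const_left _ c hlogK).congr'
      (eventually_gt_atTop 0 |>.mono fun K hK ↦ (hsplit K hK).symm)
  filter_upwards [hlogK.eventually_ge_atTop 2, eventually_gt_atTop 0, hL.eventually_ge_atTop 1,
    hL.eventually (eventually_mul_log_le m (by norm_num : (0 : ℝ) < 1 / 4)),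
    hL.eventually_ge_atTop (4 * (T / φ - c / 2 - 1))] with K hK hK0 hL1 hmL hLT
  refine ⟨hK, hL1, by linarith, ?_⟩
  have hlogK_eq : log K = log (C * K / φ ^ m) - c := by rw [hsplit K hK0]; ring
  set L := log (C * K / φ ^ m)
  have hℓ : log (log K / 2) ≤ log K / 2 - 1 := log_le_sub_one_of_pos (by linarith)
  -- By `hℓ`, `hmL` and `hlogK_eq`, the lower threshold is at least `φ (L / 4 + c / 2 + 1)`.
  have hbound : T / φ ≤ L - m * log L - log (log K / 2) := by linarith
  calc T = φ * (T / φ) := by field_simp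
    _ ≤ φ * (L - m * log L - log (log K / 2)) := by gcongr
    _ = χ K - φ * log (log K / 2) := by rw [hχ]; ring

theorem stmt_9_general (m : ℕ) (C φ : ℝ) (hC : 0 < C) (hφ : 0 < φ)
    (F : ℝ → ℝ)
    (C₀ x₀ : ℝ) (hC₀ : 0 < C₀)
    (htail : ∀ x : ℝ, x₀ ≤ x →
      |1 - F x - C / x ^ m * Real.exp (-x / φ)| ≤ C₀ / x ^ (m + 1) * Real.exp (-x / φ))
    (χ : ℕ → ℝ)
    (hχ : ∀ K : ℕ, χ K = φ * Real.log (C * K / φ ^ m)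
      - φ * (m : ℝ) * Real.log (Real.log (C * K / φ ^ m))) :
    ∃ C₁ > (0:ℝ), ∃ K₀ : ℕ, ∀ K : ℕ, K₀ ≤ K →
      ∀ (Ω : Type) [MeasurableSpace Ω] (μ : Measure Ω) [IsProbabilityMeasure μ],
        ∀ X : Fin K → Ω → ℝ, (∀ i, Measurable (X i)) →
          iIndepFun X μ →
          (∀ i x, (μ {ω | X i ω ≤ x}).toReal = F x) →
          1 - ENNReal.ofReal (C₁ / Real.log K) ≤
            μ {ω | χ K - φ * Real.log (Real.log (Real.sqrt K)) ≤ (⨆ i, X i ω) ∧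
                   (⨆ i, X i ω) ≤ χ K + φ * Real.log (Real.log (Real.sqrt K))} := by
  obtain ⟨K₀, hK₀⟩ := eventually_atTop.mp
    (eventually_threshold_bounds hC hφ hχ (max (max x₀ 1) (2 * C₀ / C)))
  refine ⟨4 + (C + C₀) * 2 ^ (m + 1) / C, by positivity, K₀, ?_⟩
  intro K hK Ω _ μ _ X _ hX hF
  obtain ⟨hlogK, hL1, hmL, ha⟩ := hK₀ K hK
  have : Nonempty (Fin K) := ⟨⟨0, Nat.pos_of_ne_zero (by rintro rfl; norm_num at hlogK)⟩⟩
  have hF0 : ∀ x, 0 ≤ F x := fun x ↦ hF (Classical.arbitrary _) x ▸ ENNReal.toReal_nonneg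
  have hmax : ∀ x, μ {ω | ⨆ i, X i ω ≤ x} = ENNReal.ofReal (F x ^ K) := fun x ↦ by
    have hμ : ∀ i, μ {ω | X i ω ≤ x} = ENNReal.ofReal (F x) := fun i ↦ by
      rw [← hF i x, ENNReal.ofReal_toReal (measure_ne_top _ _)]
    simp only [hX.measure_iSup_le, hμ, Finset.prod_const, Finset.card_univ, Fintype.card_fin,
      ENNReal.ofReal_pow (hF0 x)]
  rw [log_sqrt (Nat.cast_nonneg K)]
  refine le_trans ?_ (measure_le_sub_measure_le_le μ _ _ _)
  rw [hmax, hmax]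
  refine ENNReal.one_sub_ofReal_le_ofReal_sub_ofReal (pow_nonneg (hF0 _) K) (by positivity) ?_
  linarith [pow_add_one_sub_pow_le htail hC hC₀.le hφ hF0 hlogK rfl hL1 hmL (hχ K) ha]

/-- Lemma 6 in its general form: the maximum `M_K` of `K` i.i.d. random variables whose
common c.d.f. `F` has tail `1 - F(x) = C x^{-m} e^{-x/φ}(1 + O(1/x))` concentrates in an
interval of half-width `φ log log √K` around
`χ_K = φ log(CK/φ^m) - φ m log log(CK/φ^m)` with probability `≥ 1 - O(1/log K)`. -/
theorem stmt_9 (m : ℕ) (hm : 1 ≤ m) (C φ : ℝ) (hC : 0 < C) (hφ : 0 < φ)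
    (F : ℝ → ℝ)
    (hcdf : ∃ ν : Measure ℝ, IsProbabilityMeasure ν ∧ ∀ x, (ν (Set.Iic x)).toReal = F x)
    (C₀ x₀ : ℝ) (hC₀ : 0 < C₀) (hx₀ : 0 < x₀)
    (htail : ∀ x : ℝ, x₀ ≤ x →
      |1 - F x - C / x ^ m * Real.exp (-x / φ)| ≤ C₀ / x ^ (m + 1) * Real.exp (-x / φ))
    (χ : ℕ → ℝ)
    (hχ : ∀ K : ℕ, χ K = φ * Real.log (C * K / φ ^ m)
      - φ * (m : ℝ) * Real.log (Real.log (C * K / φ ^ m))) :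
    ∃ C₁ > (0:ℝ), ∃ K₀ : ℕ, ∀ K : ℕ, K₀ ≤ K →
      ∀ (Ω : Type) [MeasurableSpace Ω] (μ : Measure Ω) [IsProbabilityMeasure μ],
        ∀ X : Fin K → Ω → ℝ, (∀ i, Measurable (X i)) →
          iIndepFun X μ →
          (∀ i x, (μ {ω | X i ω ≤ x}).toReal = F x) →
          1 - ENNReal.ofReal (C₁ / Real.log K) ≤
            μ {ω | χ K - φ * Real.log (Real.log (Real.sqrt K)) ≤ (⨆ i, X i ω) ∧
                   (⨆ i, X i ω) ≤ χ K + φ * Real.log (Real.log (Real.sqrt K))} :=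
  stmt_9_general m C φ hC hφ F C₀ x₀ hC₀ htail χ hχ
end
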